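/- Let (H, A) be a canonical pair with A ≠ 0, and let 𝒜 and 𝒜° be the associated subspaces. Then dim 𝒜 − dim 𝒜° = 2 if and only if A is nilpotent (equivalently, if and only if all the parameters λᵢ of the canonical pair are 0). -/
import Mathlib


open Matrix

noncomputable section

open scoped Classical

/-- The `m × m` upper-triangular Jordan block `J_{λ,m}` with eigenvalue `λ`. -/
def Jb (l : ℂ) (m : ℕ) : Matrix (Fin m) (Fin m) ℂ :=
  Matrix.of fun i j =>
    if (j : ℕ) = (i : ℕ) then l else if (j : ℕ) = (i : ℕ) + 1 then 1 else 0

/-- The `m × m` anti-diagonal matrix `S_m` ( `(i,j)` entry is `1` iff `i + j = m + 1`,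
1-based). -/
def Sb (m : ℕ) : Matrix (Fin m) (Fin m) ℂ :=
  Matrix.of fun i j => if (i : ℕ) + (j : ℕ) + 1 = m then 1 else 0

/-- The size `s(λ,m)` of the matrix `M_{λ,m}`: `m` if `λ ∈ ℝ`, and `2m` otherwise. -/
def sz (l : ℂ) (m : ℕ) : ℕ := if l.im = 0 then m else 2 * m

/-- The matrix `M_{λ,m}`: the Jordan block `J_{λ,m}` if `λ ∈ ℝ`, and the block matrix
`[[0, J_{λ²,m}], [I, 0]]` otherwise. -/
def Mb (l : ℂ) (m : ℕ) : Matrix (Fin (sz l m)) (Fin (sz l m)) ℂ :=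
  Matrix.of fun i j =>
    if l.im = 0 then
      (if (j : ℕ) = (i : ℕ) then l else if (j : ℕ) = (i : ℕ) + 1 then 1 else 0)
    else if (i : ℕ) < m ∧ m ≤ (j : ℕ) then
      (if (j : ℕ) - m = (i : ℕ) then l ^ 2
       else if (j : ℕ) - m = (i : ℕ) + 1 then 1 else 0)
    else if m ≤ (i : ℕ) ∧ (i : ℕ) - m = (j : ℕ) then 1 else 0

/-- The matrix `N_{λ,m}`: `S_m` if `λ ∈ ℝ` and `S_{2m}` otherwise. -/
def Nb (l : ℂ) (m : ℕ) : Matrix (Fin (sz l m)) (Fin (sz l m)) ℂ := Sb (sz l m)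

/-- A complex number is normalized if `Re λ ≥ 0` and, when `Re λ = 0`, also `Im λ ≥ 0`. -/
def Normalized (l : ℂ) : Prop := 0 ≤ l.re ∧ (l.re = 0 → 0 ≤ l.im)

/-- The linear map `B ↦ B * X + X * Bᵀ`. -/
def rmap {n : Type*} [Fintype n] (X : Matrix n n ℂ) :
    Matrix n n ℂ →ₗ[ℂ] Matrix n n ℂ where
  toFun B := B * X + X * Bᵀ
  map_add' B C := by
    simp only [Matrix.add_mul, Matrix.mul_add, Matrix.transpose_add]
    abel
  map_smul' c B := by
    simp only [Matrix.smul_mul, Matrix.mul_smul, Matrix.transpose_smul, smul_add,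
      RingHom.id_apply]

/-- The linear map `B ↦ Bᵀ * Y + Y * B`. -/
def lmap {n : Type*} [Fintype n] (Y : Matrix n n ℂ) :
    Matrix n n ℂ →ₗ[ℂ] Matrix n n ℂ where
  toFun B := Bᵀ * Y + Y * B
  map_add' B C := by
    simp only [Matrix.add_mul, Matrix.mul_add, Matrix.transpose_add]
    abel
  map_smul' c B := by
    simp only [Matrix.smul_mul, Matrix.mul_smul, Matrix.transpose_smul, smul_add,
      RingHom.id_apply]

/-- The subspace `𝒜°` associated with `(H, A)`:  matrices `B` with
`B·A·H⁻¹ + A·H⁻¹·Bᵀ = 0` and `Bᵀ·H·conj(A) + H·conj(A)·B = 0`. -/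
def scriptAo {n : Type*} [Fintype n] [DecidableEq n] (H A : Matrix n n ℂ) :
    Submodule ℂ (Matrix n n ℂ) :=
  LinearMap.ker (rmap (A * H⁻¹)) ⊓ LinearMap.ker (lmap (H * A.map (starRingEnd ℂ)))

/-- The subspace `𝒜` associated with `(H, A)`:  matrices `B` with
`B·A·H⁻¹ + A·H⁻¹·Bᵀ ∈ ℂ·(A·H⁻¹)` and `Bᵀ·H·conj(A) + H·conj(A)·B ∈ ℂ·(H·conj(A))`. -/
def scriptA {n : Type*} [Fintype n] [DecidableEq n] (H A : Matrix n n ℂ) :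
    Submodule ℂ (Matrix n n ℂ) :=
  Submodule.comap (rmap (A * H⁻¹)) (Submodule.span ℂ {A * H⁻¹}) ⊓
    Submodule.comap (lmap (H * A.map (starRingEnd ℂ)))
      (Submodule.span ℂ {H * A.map (starRingEnd ℂ)})

section Stmt11Aux

open Matrix Module Submodule LinearMap

lemma sz_pos {l : ℂ} {m : ℕ} (hm : 0 < m) : 0 < sz l m := by
  unfold sz; split <;> omega

lemma fin_mk_eq {N a : ℕ} (h : a < N) (i : Fin N) : (i = ⟨a, h⟩) ↔ ((i : ℕ) = a) :=
  ⟨fun h' => h' ▸ rfl, fun h' => Fin.ext h'⟩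

lemma Sb_apply {m : ℕ} (i j : Fin m) :
    Sb m i j = if (i : ℕ) + (j : ℕ) + 1 = m then 1 else 0 := rfl

lemma Sb_mul_Sb (m : ℕ) : Sb m * Sb m = 1 := by
  ext i j
  have hi := i.isLt
  have hj := j.isLt
  rw [Matrix.mul_apply, Matrix.one_apply]
  rcases eq_or_ne i j with rfl | hij
  · rw [if_pos rfl, Finset.sum_eq_single (⟨m - 1 - (i : ℕ), by omega⟩ : Fin m)]
    · simp only [Sb_apply]
      rw [if_pos (by omega), if_pos (by omega)]; ring
    · intro k _ hk
      have hk' : (k : ℕ) ≠ m - 1 - (i : ℕ) := fun h => hk (Fin.ext (by simpa using h))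
      simp only [Sb_apply]
      rw [if_neg (by omega)]; ring
    · intro h; exact absurd (Finset.mem_univ _) h
  · have hij2 : (i : ℕ) ≠ (j : ℕ) := fun hh => hij (Fin.ext hh)
    rw [if_neg hij]
    apply Finset.sum_eq_zero
    intro k _
    simp only [Sb_apply]
    split_ifs <;> first | (exfalso; omega) | ring1

lemma JS_support {n : ℕ} {i j : Fin n} (h : (Jb 0 n * Sb n) i j ≠ 0) :
    (i : ℕ) + (j : ℕ) + 2 = n := by
  by_contra hn
  apply h
  rw [Matrix.mul_apply]
  apply Finset.sum_eq_zero
  intro k _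
  simp only [Jb, Sb, Matrix.of_apply]
  split_ifs <;> first | (exfalso; omega) | ring1

lemma SJ_support {n : ℕ} {i j : Fin n} (h : (Sb n * Jb 0 n) i j ≠ 0) :
    (i : ℕ) + (j : ℕ) = n := by
  by_contra hn
  apply h
  rw [Matrix.mul_apply]
  apply Finset.sum_eq_zero
  intro k _
  simp only [Jb, Sb, Matrix.of_apply]
  split_ifs <;> first | (exfalso; omega) | ring1

/-- If the `i0` column of `N` is concentrated at `t0` with value `c₂` and the `t0` column of
`M` is concentrated at `i0` with value `c₁`, then the `i0` column of `M * N` is concentrated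
at `i0` with value `c₁ * c₂`. -/
lemma col_step {n' : Type*} [Fintype n'] [DecidableEq n'] {M N : Matrix n' n' ℂ}
    {i0 t0 : n'} {c₁ c₂ : ℂ}
    (hN : ∀ i, N i i0 = if i = t0 then c₂ else 0)
    (hM : ∀ i, M i t0 = if i = i0 then c₁ else 0) :
    ∀ i, (M * N) i i0 = if i = i0 then c₁ * c₂ else 0 := by
  intro i
  rw [Matrix.mul_apply, Finset.sum_eq_single t0]
  · rw [hN t0, if_pos rfl, hM i]
    split_ifs <;> ring
  · intro t _ ht
    rw [hN t, if_neg ht, mul_zero]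
  · intro h; exact absurd (Finset.mem_univ _) h

lemma pow_col {n' : Type*} [Fintype n'] [DecidableEq n'] (M : Matrix n' n' ℂ)
    (i0 : n') (c : ℂ) (h : ∀ i, M i i0 = if i = i0 then c else 0) :
    ∀ k : ℕ, ∀ i, (M ^ k) i i0 = if i = i0 then c ^ k else 0 := by
  intro k
  induction k with
  | zero => intro i; simp [Matrix.one_apply]
  | succ k ih =>
    intro i
    rw [pow_succ, col_step (M := M ^ k) (N := M) (i0 := i0) (t0 := i0) h ih i, pow_succ]

section MbCols

variable {l : ℂ} {m : ℕ}

lemma Mb_col_real (him : l.im = 0) (hm : 0 < m) (i : Fin (sz l m)) :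
    Mb l m i ⟨0, sz_pos hm⟩ = if i = ⟨0, sz_pos hm⟩ then l else 0 := by
  simp only [Mb, Matrix.of_apply]
  rw [if_pos him]
  simp only [fin_mk_eq]
  by_cases hi : (i : ℕ) = 0
  · rw [if_pos hi, if_pos (by omega)]
  · rw [if_neg hi, if_neg (by omega), if_neg (by omega)]

lemma m_lt_sz (him : ¬ l.im = 0) (hm : 0 < m) : m < sz l m := by
  unfold sz; rw [if_neg him]; omega

lemma Mb_col0_complex (him : ¬ l.im = 0) (hm : 0 < m) (i : Fin (sz l m)) :
    Mb l m i ⟨0, sz_pos hm⟩ = if i = ⟨m, m_lt_sz him hm⟩ then 1 else 0 := by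
  simp only [Mb, Matrix.of_apply]
  rw [if_neg him]
  simp only [fin_mk_eq]
  rw [if_neg (by omega)]
  by_cases hi : (i : ℕ) = m
  · rw [if_pos (by omega), if_pos hi]
  · rw [if_neg (by omega), if_neg hi]

lemma Mb_colm_complex (him : ¬ l.im = 0) (hm : 0 < m) (i : Fin (sz l m)) :
    Mb l m i ⟨m, m_lt_sz him hm⟩ = if i = ⟨0, sz_pos hm⟩ then l ^ 2 else 0 := by
  have hisz := i.isLt
  have hsz : sz l m = 2 * m := by unfold sz; rw [if_neg him]
  have hisz' : (i : ℕ) < 2 * m := hsz ▸ hisz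
  simp only [Mb, Matrix.of_apply]
  rw [if_neg him]
  simp only [fin_mk_eq]
  by_cases hi0 : (i : ℕ) < m
  · rw [if_pos (by omega)]
    by_cases hi : (i : ℕ) = 0
    · rw [if_pos (by omega), if_pos hi]
    · rw [if_neg (by omega), if_neg (by omega), if_neg hi]
  · rw [if_neg (by omega), if_neg (by omega), if_neg (by omega)]

lemma conj_col {n' : Type*} [Fintype n'] [DecidableEq n'] {M : Matrix n' n' ℂ}
    {i0 t0 : n'} {c : ℂ} (h : ∀ i, M i t0 = if i = i0 then c else 0) :
    ∀ i, (M.map (starRingEnd ℂ)) i t0 = if i = i0 then (starRingEnd ℂ) c else 0 := by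
  intro i
  rw [Matrix.map_apply, h i, apply_ite (starRingEnd ℂ), map_zero]

lemma V_col (hm : 0 < m) (i : Fin (sz l m)) :
    (Mb l m * (Mb l m).map (starRingEnd ℂ)) i ⟨0, sz_pos hm⟩ =
      if i = ⟨0, sz_pos hm⟩ then l ^ 2 else 0 := by
  by_cases him : l.im = 0
  · have hconj : (starRingEnd ℂ) l = l := Complex.conj_eq_iff_im.mpr him
    rw [col_step (M := Mb l m) (N := (Mb l m).map (starRingEnd ℂ))
      (i0 := ⟨0, sz_pos hm⟩) (t0 := ⟨0, sz_pos hm⟩) (c₁ := l) (c₂ := l)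
      (fun i => by rw [conj_col (Mb_col_real him hm) i, hconj])
      (Mb_col_real him hm) i]
    split_ifs <;> ring
  · rw [col_step (M := Mb l m) (N := (Mb l m).map (starRingEnd ℂ))
      (i0 := ⟨0, sz_pos hm⟩) (t0 := ⟨m, m_lt_sz him hm⟩) (c₁ := l ^ 2) (c₂ := 1)
      (fun i => by rw [conj_col (Mb_col0_complex him hm) i]; simp)
      (Mb_colm_complex him hm) i]
    split_ifs <;> ring

lemma V_pow_entry (hm : 0 < m) (k : ℕ) :
    ((Mb l m * (Mb l m).map (starRingEnd ℂ)) ^ k) ⟨0, sz_pos hm⟩ ⟨0, sz_pos hm⟩ =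
      (l ^ 2) ^ k := by
  rw [pow_col _ _ _ (V_col hm) k, if_pos rfl]

lemma Mb_nilp (hm : 0 < m) (h : IsNilpotent (Mb l m)) : l = 0 := by
  obtain ⟨k, hk⟩ := h
  have hk1 : Mb l m ^ (k + 1) = 0 := by rw [pow_succ, hk, Matrix.zero_mul]
  by_cases him : l.im = 0
  · have hc := pow_col (Mb l m) _ l (Mb_col_real him hm) (k + 1) ⟨0, sz_pos hm⟩
    rw [hk1, if_pos rfl] at hc
    have h1 : l ^ (k + 1) = 0 := by simpa using hc.symm
    exact pow_eq_zero_iff (Nat.succ_ne_zero k) |>.mp h1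
  · have hsq : (Mb l m * Mb l m) ^ (k + 1) = 0 := by
      rw [(Commute.refl (Mb l m)).mul_pow, hk1, Matrix.zero_mul]
    have hcol : ∀ i, (Mb l m * Mb l m) i ⟨0, sz_pos hm⟩ =
        if i = ⟨0, sz_pos hm⟩ then l ^ 2 * 1 else 0 :=
      col_step (Mb_col0_complex him hm) (Mb_colm_complex him hm)
    have hc := pow_col _ _ _ hcol (k + 1) ⟨0, sz_pos hm⟩
    rw [hsq, if_pos rfl] at hc
    have h2 : (l ^ 2 * 1) ^ (k + 1) = 0 := by simpa using hc.symm
    have h3 : l ^ 2 * 1 = 0 := pow_eq_zero_iff (Nat.succ_ne_zero k) |>.mp h2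
    have h4 : l ^ 2 = 0 := by simpa using h3
    exact pow_eq_zero_iff two_ne_zero |>.mp h4

lemma V_nilp (hm : 0 < m) (h : IsNilpotent (Mb l m * (Mb l m).map (starRingEnd ℂ))) :
    l = 0 := by
  obtain ⟨k, hk⟩ := h
  have hk1 : (Mb l m * (Mb l m).map (starRingEnd ℂ)) ^ (k + 1) = 0 := by
    rw [pow_succ, hk, Matrix.zero_mul]
  have hc := V_pow_entry (l := l) hm (k + 1)
  rw [hk1] at hc
  have h1 : (l ^ 2) ^ (k + 1) = 0 := by simpa using hc.symm
  exact pow_eq_zero_iff two_ne_zero |>.mp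
    (pow_eq_zero_iff (Nat.succ_ne_zero k) |>.mp h1)

end MbCols

lemma Jb0_pow_entry {n : ℕ} :
    ∀ (k : ℕ) (i j : Fin n), (j : ℕ) < (i : ℕ) + k → ((Jb 0 n) ^ k) i j = 0 := by
  intro k
  induction k with
  | zero =>
    intro i j h
    rw [pow_zero, Matrix.one_apply_ne (fun h' => by rw [h'] at h; omega)]
  | succ k ih =>
    intro i j h
    rw [pow_succ, Matrix.mul_apply]
    apply Finset.sum_eq_zero
    intro t _
    by_cases ht : (t : ℕ) < (i : ℕ) + k
    · rw [ih i t ht, zero_mul]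
    · simp only [Jb, Matrix.of_apply]
      split_ifs <;> first | (exfalso; omega) | ring1

lemma Jb0_pow_zero (n : ℕ) : (Jb 0 n) ^ n = 0 := by
  ext i j
  rw [Matrix.zero_apply]
  exact Jb0_pow_entry n i j (by have := j.isLt; omega)

lemma Mb_eq_Jb0 {l : ℂ} {m : ℕ} (hl : l = 0) : Mb l m = Jb 0 (sz l m) := by
  subst hl
  ext i j
  simp [Mb, Jb]

lemma bd_eq_zero {ι : Type*} [DecidableEq ι] {σ : ι → Type*} [∀ i, Fintype (σ i)]
    {f : ∀ i, Matrix (σ i) (σ i) ℂ} (h : Matrix.blockDiagonal' f = 0) (i : ι) : f i = 0 := by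
  ext a b
  have h2 := Matrix.ext_iff.mpr h ⟨i, a⟩ ⟨i, b⟩
  rwa [Matrix.blockDiagonal'_apply_eq, Matrix.zero_apply] at h2

/-- Rank–nullity style identity for the preimage of a submodule. -/
lemma finrank_comap_add {V W : Type*} [AddCommGroup V] [Module ℂ V] [AddCommGroup W]
    [Module ℂ W] [FiniteDimensional ℂ V] [FiniteDimensional ℂ W]
    (f : V →ₗ[ℂ] W) (S : Submodule ℂ W) :
    Module.finrank ℂ (Submodule.comap f S) =
      Module.finrank ℂ (LinearMap.ker f) +
        Module.finrank ℂ (S ⊓ LinearMap.range f : Submodule ℂ W) := by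
  classical
  have hle : LinearMap.ker f ≤ Submodule.comap f S := by
    intro x hx
    rw [Submodule.mem_comap, LinearMap.mem_ker.mp hx]
    exact S.zero_mem
  have hmem : ∀ x ∈ Submodule.comap f S, f x ∈ (S ⊓ LinearMap.range f : Submodule ℂ W) :=
    fun x hx => ⟨hx, ⟨x, rfl⟩⟩
  set g := f.restrict hmem with hg
  have hrank := g.finrank_range_add_finrank_ker
  have hrange : LinearMap.range g = ⊤ := by
    rw [LinearMap.range_eq_top]
    rintro ⟨y, hyS, x, rfl⟩
    exact ⟨⟨x, hyS⟩, rfl⟩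
  have hker : LinearMap.ker g = (LinearMap.ker f).comap (Submodule.comap f S).subtype :=
    LinearMap.ker_restrict hmem
  rw [hrange, finrank_top, hker] at hrank
  have heq := (Submodule.comapSubtypeEquivOfLe hle).finrank_eq
  omega

lemma commutator_pow {n' : Type*} [Fintype n'] [DecidableEq n']
    {B Z : Matrix n' n' ℂ} {d : ℂ} (h : B * Z = d • Z + Z * B) :
    ∀ k : ℕ, B * Z ^ k = ((k : ℂ) * d) • Z ^ k + Z ^ k * B := by
  intro k
  induction k with
  | zero => simp
  | succ k ih =>
    have hs : ((k : ℂ) * d) + d = (((k + 1 : ℕ) : ℂ)) * d := by push_cast; ring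
    calc B * Z ^ (k + 1) = (B * Z ^ k) * Z := by rw [pow_succ, mul_assoc]
      _ = ((k : ℂ) * d) • (Z ^ k * Z) + Z ^ k * (B * Z) := by
          rw [ih, add_mul, Matrix.smul_mul, mul_assoc]
      _ = ((k : ℂ) * d) • Z ^ (k + 1) + (d • Z ^ (k + 1) + Z ^ (k + 1) * B) := by
          rw [h, mul_add, mul_smul_comm, ← pow_succ, ← mul_assoc, ← pow_succ]
      _ = (((k + 1 : ℕ) : ℂ) * d) • Z ^ (k + 1) + Z ^ (k + 1) * B := by
          rw [← add_assoc, ← add_smul, hs]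

lemma Nb_eq (l : ℂ) (m : ℕ) : Nb l m = Sb (sz l m) := rfl

/-- The diagonal vector used to build elements of `scriptA` in the nilpotent case. -/
def dvec (c₁ c₂ : ℂ) (n : ℕ) : Fin n → ℂ :=
  fun k => ((c₂ - c₁) / 2) * ((k : ℕ) : ℂ) + (c₂ - ((c₂ - c₁) / 2) * (n : ℂ)) / 2

lemma dvec_cond1 {n : ℕ} (c₁ c₂ : ℂ) {i j : Fin n} (h : (i : ℕ) + (j : ℕ) + 2 = n) :
    dvec c₁ c₂ n i + dvec c₁ c₂ n j = c₁ := by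
  have hn : ((i : ℕ) : ℂ) + ((j : ℕ) : ℂ) + 2 = (n : ℂ) := by exact_mod_cast h
  simp only [dvec]
  linear_combination ((c₂ - c₁) / 2) * hn

lemma dvec_cond2 {n : ℕ} (c₁ c₂ : ℂ) {i j : Fin n} (h : (i : ℕ) + (j : ℕ) = n) :
    dvec c₁ c₂ n i + dvec c₁ c₂ n j = c₂ := by
  have hn : ((i : ℕ) : ℂ) + ((j : ℕ) : ℂ) = (n : ℂ) := by exact_mod_cast h
  simp only [dvec]
  linear_combination ((c₂ - c₁) / 2) * hn

lemma diag_sandwich {n : ℕ} (P : Matrix (Fin n) (Fin n) ℂ) (d : Fin n → ℂ) (c : ℂ)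
    (h : ∀ i j, P i j ≠ 0 → d i + d j = c) :
    Matrix.diagonal d * P + P * Matrix.diagonal d = c • P := by
  ext i j
  simp only [Matrix.add_apply, Matrix.diagonal_mul, Matrix.mul_diagonal, Matrix.smul_apply,
    smul_eq_mul]
  by_cases hP : P i j = 0
  · rw [hP]; ring
  · have hd := h i j hP
    linear_combination P i j * hd

lemma Jb0_conj (n : ℕ) : (Jb 0 n).map (starRingEnd ℂ) = Jb 0 n := by
  ext i j
  simp [Jb, apply_ite (starRingEnd ℂ)]

end Stmt11Aux

/-- For a canonical pair `(H, A)` with `A ≠ 0`,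
`dim 𝒜 − dim 𝒜° = 2` iff `A` is nilpotent, equivalently iff all `λᵢ = 0`. -/
theorem stmt11 (γ : ℕ) (hγ : 0 < γ) (lam : Fin γ → ℂ) (mm : Fin γ → ℕ) (eps : Fin γ → ℂ)
    (hnorm : ∀ i, Normalized (lam i)) (hm : ∀ i, 0 < mm i)
    (heps : ∀ i, eps i = 1 ∨ eps i = -1)
    (H A : Matrix ((i : Fin γ) × Fin (sz (lam i) (mm i)))
      ((i : Fin γ) × Fin (sz (lam i) (mm i))) ℂ)
    (hH : H = Matrix.blockDiagonal' fun i => eps i • Nb (lam i) (mm i))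
    (hA : A = Matrix.blockDiagonal' fun i => Mb (lam i) (mm i))
    (hA0 : A ≠ 0) :
    (Module.finrank ℂ ↥(scriptA H A) = Module.finrank ℂ ↥(scriptAo H A) + 2 ↔
      IsNilpotent A) ∧
    (IsNilpotent A ↔ ∀ i, lam i = 0) := by
  classical
  have hee : ∀ i, eps i * eps i = 1 := fun i => by
    rcases heps i with h | h <;> rw [h] <;> norm_num
  have hHH : H * H = 1 := by
    rw [hH, ← Matrix.blockDiagonal'_mul]
    rw [show (fun k => (eps k • Nb (lam k) (mm k)) * (eps k • Nb (lam k) (mm k)))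
        = fun k => (1 : Matrix (Fin (sz (lam k) (mm k))) (Fin (sz (lam k) (mm k))) ℂ) from
      funext fun k => by
        rw [Matrix.smul_mul, Matrix.mul_smul, smul_smul, hee k, Nb_eq, Sb_mul_Sb, one_smul]]
    exact Matrix.blockDiagonal'_one
  have hHinv : H⁻¹ = H := Matrix.inv_eq_right_inv hHH
  set X := A * H⁻¹ with hXdef
  set Y := H * A.map (starRingEnd ℂ) with hYdef
  have hXb : X = Matrix.blockDiagonal'
      (fun k => eps k • (Mb (lam k) (mm k) * Sb (sz (lam k) (mm k)))) := by
    rw [hXdef, hHinv, hA, hH, ← Matrix.blockDiagonal'_mul]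
    exact congrArg Matrix.blockDiagonal' (funext fun k => by rw [Matrix.mul_smul, Nb_eq])
  have hAc : A.map (starRingEnd ℂ) = Matrix.blockDiagonal'
      (fun k => (Mb (lam k) (mm k)).map (starRingEnd ℂ)) := by
    rw [hA, Matrix.blockDiagonal'_map _ _ (map_zero _)]
  have hYb : Y = Matrix.blockDiagonal'
      (fun k => eps k • (Sb (sz (lam k) (mm k)) * (Mb (lam k) (mm k)).map (starRingEnd ℂ))) := by
    rw [hYdef, hH, hAc, ← Matrix.blockDiagonal'_mul]
    exact congrArg Matrix.blockDiagonal' (funext fun k => by rw [Matrix.smul_mul, Nb_eq])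
  have hXY : X * Y = Matrix.blockDiagonal'
      (fun k => Mb (lam k) (mm k) * (Mb (lam k) (mm k)).map (starRingEnd ℂ)) := by
    calc X * Y = A * ((H * H) * A.map (starRingEnd ℂ)) := by
          rw [hXdef, hYdef, hHinv, mul_assoc, mul_assoc]
      _ = A * A.map (starRingEnd ℂ) := by rw [hHH, one_mul]
      _ = _ := by rw [hAc, hA, ← Matrix.blockDiagonal'_mul]
  have hXne : X ≠ 0 := by
    intro h0
    apply hA0
    have hAX : A = X * H := by rw [hXdef, hHinv, mul_assoc, hHH, mul_one]
    rw [hAX, h0, Matrix.zero_mul]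
  have hAcne : A.map (starRingEnd ℂ) ≠ 0 := by
    intro h0
    apply hA0
    ext i j
    have h2 := Matrix.ext_iff.mpr h0 i j
    rw [Matrix.map_apply, Matrix.zero_apply] at h2
    have := congrArg (starRingEnd ℂ) h2
    simpa using this
  have hYne : Y ≠ 0 := by
    intro h0
    apply hAcne
    have hAY : A.map (starRingEnd ℂ) = H * Y := by rw [hYdef, ← mul_assoc, hHH, one_mul]
    rw [hAY, h0, Matrix.mul_zero]
  set ψ := (rmap X).prod (lmap Y) with hψ
  set S := (Submodule.span ℂ {X}).prod (Submodule.span ℂ {Y}) with hS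
  have hAeq : scriptA H A = Submodule.comap ψ S := by
    simp only [scriptA, hψ, hS]
    exact (LinearMap.comap_prod_prod _ _ _ _).symm
  have hAoeq : scriptAo H A = LinearMap.ker ψ := by
    simp only [scriptAo, hψ]
    exact (LinearMap.ker_prod _ _).symm
  have hdim : Module.finrank ℂ (scriptA H A) = Module.finrank ℂ (scriptAo H A) +
      Module.finrank ℂ (S ⊓ LinearMap.range ψ : Submodule ℂ _) := by
    rw [hAeq, hAoeq, finrank_comap_add]
  have part2 : IsNilpotent A ↔ ∀ i, lam i = 0 := by
    constructor
    · rintro ⟨k, hk⟩ i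
      apply Mb_nilp (hm i)
      refine ⟨k, ?_⟩
      have hbz : Matrix.blockDiagonal' ((fun j => Mb (lam j) (mm j)) ^ k) = 0 := by
        rw [Matrix.blockDiagonal'_pow, ← hA, hk]
      exact bd_eq_zero hbz i
    · intro hl
      set N := Finset.univ.sup (fun i => sz (lam i) (mm i)) with hN
      have hble : ∀ j, sz (lam j) (mm j) ≤ N := fun j =>
        Finset.le_sup (f := fun i => sz (lam i) (mm i)) (Finset.mem_univ j)
      have hjz : ∀ j, Mb (lam j) (mm j) ^ N = 0 := fun j => by
        rw [Mb_eq_Jb0 (hl j)]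
        have h1 := hble j
        rw [show N = sz (lam j) (mm j) + (N - sz (lam j) (mm j)) by omega, pow_add,
          Jb0_pow_zero, Matrix.zero_mul]
      refine ⟨N, ?_⟩
      rw [hA, ← Matrix.blockDiagonal'_pow,
        show ((fun j => Mb (lam j) (mm j)) ^ N)
          = (0 : ∀ j, Matrix (Fin (sz (lam j) (mm j))) (Fin (sz (lam j) (mm j))) ℂ) from
          funext fun j => hjz j]
      exact Matrix.blockDiagonal'_zero
  refine ⟨⟨?_, ?_⟩, part2⟩
  · -- dim difference 2 → nilpotent
    intro hdim2
    by_contra hnil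
    obtain ⟨i0, hi0⟩ : ∃ i, lam i ≠ 0 := by
      by_contra hall
      push_neg at hall
      exact hnil (part2.mpr hall)
    have hZpow : ∀ k : ℕ, (X * Y) ^ k ≠ 0 := by
      intro k hzero
      have h2 : Matrix.blockDiagonal'
          ((fun j => Mb (lam j) (mm j) * (Mb (lam j) (mm j)).map (starRingEnd ℂ)) ^ k) = 0 := by
        rw [Matrix.blockDiagonal'_pow, ← hXY, hzero]
      have h3 : (Mb (lam i0) (mm i0) * (Mb (lam i0) (mm i0)).map (starRingEnd ℂ)) ^ k = 0 :=
        bd_eq_zero h2 i0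
      have h4 := V_pow_entry (l := lam i0) (hm i0) k
      rw [h3, Matrix.zero_apply] at h4
      have h5 : lam i0 ^ 2 = 0 := by
        rcases Nat.eq_zero_or_pos k with rfl | hk
        · rw [pow_zero] at h4; exact absurd h4.symm one_ne_zero
        · exact pow_eq_zero_iff (by omega) |>.mp h4.symm
      exact hi0 (pow_eq_zero_iff two_ne_zero |>.mp h5)
    have key : ∀ u v : ℂ, ∀ B, B * X + X * Bᵀ = u • X → Bᵀ * Y + Y * B = v • Y → u = v := by
      intro u v B h1 h2
      by_contra huv
      have hδ : u - v ≠ 0 := sub_ne_zero.mpr huv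
      have hstep : B * (X * Y) = (u - v) • (X * Y) + (X * Y) * B := by
        have e1 : B * X = u • X - X * Bᵀ := eq_sub_of_add_eq h1
        have e2 : Bᵀ * Y = v • Y - Y * B := eq_sub_of_add_eq h2
        calc B * (X * Y) = (B * X) * Y := (mul_assoc B X Y).symm
          _ = (u • X - X * Bᵀ) * Y := by rw [e1]
          _ = u • (X * Y) - X * (Bᵀ * Y) := by
              rw [Matrix.sub_mul, Matrix.smul_mul, mul_assoc X Bᵀ Y]
          _ = u • (X * Y) - X * (v • Y - Y * B) := by rw [e2]
          _ = u • (X * Y) - v • (X * Y) + (X * Y) * B := by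
              rw [Matrix.mul_sub, Matrix.mul_smul, ← mul_assoc X Y B]
              abel
          _ = (u - v) • (X * Y) + (X * Y) * B := by rw [sub_smul]
      have hpow := commutator_pow hstep
      set T : Module.End ℂ (Matrix ((i : Fin γ) × Fin (sz (lam i) (mm i)))
          ((i : Fin γ) × Fin (sz (lam i) (mm i))) ℂ) :=
        LinearMap.mulLeft ℂ B - LinearMap.mulRight ℂ B with hT
      have hTeig : ∀ k : ℕ, T ((X * Y) ^ k) = ((k : ℂ) * (u - v)) • (X * Y) ^ k := by
        intro k
        rw [hT, LinearMap.sub_apply, LinearMap.mulLeft_apply, LinearMap.mulRight_apply,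
          hpow k, add_sub_cancel_right]
      have heval : ∀ k : ℕ, Module.End.HasEigenvalue T ((k : ℂ) * (u - v)) := fun k =>
        Module.End.hasEigenvalue_of_hasEigenvector
          ⟨Module.End.mem_eigenspace_iff.mpr (hTeig k), hZpow k⟩
      have hinj : Function.Injective (fun k : ℕ => (k : ℂ) * (u - v)) := by
        intro a b hab
        exact Nat.cast_injective (mul_right_cancel₀ hδ hab)
      have hroot : Set.Infinite {x : ℂ | (minpoly ℂ T).IsRoot x} := by
        apply (Set.infinite_range_of_injective hinj).mono
        rintro x ⟨k, rfl⟩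
        exact Module.End.hasEigenvalue_iff_isRoot.mp (heval k)
      exact minpoly.ne_zero (Algebra.IsIntegral.isIntegral (R := ℂ) T)
        (Polynomial.eq_zero_of_infinite_isRoot _ hroot)
    have hbound : Module.finrank ℂ (S ⊓ LinearMap.range ψ : Submodule ℂ _) ≤ 1 := by
      have hle : (S ⊓ LinearMap.range ψ : Submodule ℂ _) ≤ Submodule.span ℂ {(X, Y)} := by
        intro z hz
        obtain ⟨hzS, hzR⟩ := Submodule.mem_inf.mp hz
        obtain ⟨B, hB⟩ := hzR
        obtain ⟨hp, hq⟩ := Submodule.mem_prod.mp hzS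
        obtain ⟨u, hu⟩ := Submodule.mem_span_singleton.mp hp
        obtain ⟨v, hv⟩ := Submodule.mem_span_singleton.mp hq
        have hB1 : B * X + X * Bᵀ = u • X := by
          have h' := congrArg Prod.fst hB
          rw [← hu] at h'
          exact h'
        have hB2 : Bᵀ * Y + Y * B = v • Y := by
          have h' := congrArg Prod.snd hB
          rw [← hv] at h'
          exact h'
        have huv := key u v B hB1 hB2
        rw [Submodule.mem_span_singleton]
        refine ⟨u, ?_⟩
        apply Prod.ext
        · simpa using hu
        · rw [huv] at hu ⊢
          simpa using hv
      calc Module.finrank ℂ (S ⊓ LinearMap.range ψ : Submodule ℂ _)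
          ≤ Module.finrank ℂ (Submodule.span ℂ {(X, Y)}) := Submodule.finrank_mono hle
        _ = 1 := finrank_span_singleton (fun h0 => hXne (congrArg Prod.fst h0))
    omega
  · -- nilpotent → dim difference 2
    intro hnil
    have hall : ∀ i, lam i = 0 := part2.mp hnil
    have hMbJ : ∀ k, Mb (lam k) (mm k) = Jb 0 (sz (lam k) (mm k)) := fun k =>
      Mb_eq_Jb0 (hall k)
    have hwit : ∀ c₁ c₂ : ℂ, ∃ B, rmap X B = c₁ • X ∧ lmap Y B = c₂ • Y := by
      intro c₁ c₂
      have hBT : (Matrix.blockDiagonal'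
            (fun k => Matrix.diagonal (dvec c₁ c₂ (sz (lam k) (mm k)))))ᵀ
          = Matrix.blockDiagonal'
            (fun k => Matrix.diagonal (dvec c₁ c₂ (sz (lam k) (mm k)))) := by
        rw [Matrix.blockDiagonal'_transpose]
        exact congrArg Matrix.blockDiagonal'
          (funext fun k => Matrix.diagonal_transpose _)
      refine ⟨Matrix.blockDiagonal'
        (fun k => Matrix.diagonal (dvec c₁ c₂ (sz (lam k) (mm k)))), ?_, ?_⟩
      · show _ * X + X * _ᵀ = c₁ • X
        rw [hBT, hXb, ← Matrix.blockDiagonal'_mul, ← Matrix.blockDiagonal'_mul,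
          ← Matrix.blockDiagonal'_add, ← Matrix.blockDiagonal'_smul]
        apply congrArg Matrix.blockDiagonal'
        funext k
        simp only [Pi.add_apply, Pi.smul_apply]
        rw [hMbJ k, Matrix.mul_smul, Matrix.smul_mul, ← smul_add,
          diag_sandwich _ _ c₁ (fun i j hP => dvec_cond1 c₁ c₂ (JS_support hP)),
          smul_comm]
      · show _ᵀ * Y + Y * _ = c₂ • Y
        rw [hBT, hYb, ← Matrix.blockDiagonal'_mul, ← Matrix.blockDiagonal'_mul,
          ← Matrix.blockDiagonal'_add, ← Matrix.blockDiagonal'_smul]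
        apply congrArg Matrix.blockDiagonal'
        funext k
        simp only [Pi.add_apply, Pi.smul_apply]
        rw [hMbJ k, Jb0_conj, Matrix.mul_smul, Matrix.smul_mul, ← smul_add,
          diag_sandwich _ _ c₂ (fun i j hP => dvec_cond2 c₁ c₂ (SJ_support hP)),
          smul_comm]
    obtain ⟨B₁, hB₁r, hB₁l⟩ := hwit 1 0
    obtain ⟨B₂, hB₂r, hB₂l⟩ := hwit 0 1
    have hSle : S ≤ LinearMap.range ψ := by
      intro z hz
      obtain ⟨hp, hq⟩ := Submodule.mem_prod.mp hz
      obtain ⟨u, hu⟩ := Submodule.mem_span_singleton.mp hp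
      obtain ⟨v, hv⟩ := Submodule.mem_span_singleton.mp hq
      refine ⟨u • B₁ + v • B₂, ?_⟩
      apply Prod.ext
      · show rmap X (u • B₁ + v • B₂) = z.1
        rw [_root_.map_add, _root_.map_smul, _root_.map_smul, hB₁r, hB₂r, one_smul,
          zero_smul, smul_zero, add_zero, hu]
      · show lmap Y (u • B₁ + v • B₂) = z.2
        rw [_root_.map_add, _root_.map_smul, _root_.map_smul, hB₁l, hB₂l, one_smul,
          zero_smul, smul_zero, zero_add, hv]
    have hfr : Module.finrank ℂ (S ⊓ LinearMap.range ψ : Submodule ℂ _) = 2 := by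
      rw [inf_eq_left.mpr hSle]
      have hSpan : S = Submodule.span ℂ
          {((X, 0) : Matrix _ _ ℂ × Matrix _ _ ℂ), ((0 : Matrix _ _ ℂ), Y)} := by
        apply le_antisymm
        · intro z hz
          obtain ⟨hp, hq⟩ := Submodule.mem_prod.mp hz
          obtain ⟨u, hu⟩ := Submodule.mem_span_singleton.mp hp
          obtain ⟨v, hv⟩ := Submodule.mem_span_singleton.mp hq
          rw [Submodule.mem_span_pair]
          refine ⟨u, v, ?_⟩
          apply Prod.ext
          · simpa using hu
          · simpa using hv
        · rw [Submodule.span_le]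
          rintro w hw
          rcases hw with rfl | hw
          · exact Submodule.mem_prod.mpr
              ⟨Submodule.mem_span_singleton_self X, Submodule.zero_mem _⟩
          · rw [Set.mem_singleton_iff] at hw
            subst hw
            exact Submodule.mem_prod.mpr
              ⟨Submodule.zero_mem _, Submodule.mem_span_singleton_self Y⟩
      have hli : LinearIndependent ℂ
          ![((X, 0) : Matrix _ _ ℂ × Matrix _ _ ℂ), ((0 : Matrix _ _ ℂ), Y)] := by
        rw [LinearIndependent.pair_iff]
        intro s t hst
        have h1 : s • X = 0 := by
          have := congrArg Prod.fst hst
          simpa using this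
        have h2 : t • Y = 0 := by
          have := congrArg Prod.snd hst
          simpa using this
        constructor
        · rcases smul_eq_zero.mp h1 with h | h
          · exact h
          · exact absurd h hXne
        · rcases smul_eq_zero.mp h2 with h | h
          · exact h
          · exact absurd h hYne
      rw [hSpan, show ({((X, 0) : Matrix _ _ ℂ × Matrix _ _ ℂ), ((0 : Matrix _ _ ℂ), Y)} :
            Set (Matrix _ _ ℂ × Matrix _ _ ℂ))
          = Set.range ![((X, 0) : Matrix _ _ ℂ × Matrix _ _ ℂ), ((0 : Matrix _ _ ℂ), Y)] from
          (Matrix.range_cons_cons_empty _ _ _).symm,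
        finrank_span_eq_card hli]
      simp
    omega
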